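/- Let Ω ⊆ ℝ^n be open with coordinate functions x^1,…,x^n, and let ξ_1^j (1 ≤ j ≤ n), ξ_2^1, and c_{kℓ}^m (1 ≤ k,ℓ,m ≤ n) be smooth ℂ-valued functions on Ω satisfying: (i) ∂²ξ_1^j/∂x^k∂x^ℓ = c_{kℓ}^j for all j,k,ℓ, and (ii) ξ_1^m = −∂ξ_2^1/∂x^m + Σ_{j=1}^n x^j · ∂ξ_1^j/∂x^m for all m. Then the function F := −(1/2)ξ_2^1 + (1/2)Σ_{j=1}^n x^j ξ_1^j satisfies ∂F/∂x^m = ξ_1^m for all m, and hence ∂³F/∂x^k∂x^ℓ∂x^m = c_{kℓ}^m for all k, ℓ, m. -/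

import Mathlib

noncomputable def pd {n : ℕ} (m : Fin n) (f : (Fin n → ℝ) → ℂ) (x : Fin n → ℝ) : ℂ :=
  fderiv ℝ f x (Pi.single m 1)

section helpers
variable {n : ℕ} {m : Fin n} {f g : (Fin n → ℝ) → ℂ} {x : Fin n → ℝ}

lemma pd_add (hf : DifferentiableAt ℝ f x) (hg : DifferentiableAt ℝ g x) :
    pd m (fun y => f y + g y) x = pd m f x + pd m g x := by
  simp [pd, fderiv_fun_add hf hg]

lemma pd_const_mul (c : ℂ) (hf : DifferentiableAt ℝ f x) :
    pd m (fun y => c * f y) x = c * pd m f x := by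
  simp [pd, fderiv_const_mul hf c]

lemma pd_mul (hf : DifferentiableAt ℝ f x) (hg : DifferentiableAt ℝ g x) :
    pd m (fun y => f y * g y) x = pd m f x * g x + f x * pd m g x := by
  simp only [pd, fderiv_fun_mul hf hg, ContinuousLinearMap.add_apply,
    ContinuousLinearMap.smul_apply, smul_eq_mul]
  ring

lemma pd_sum {ι : Type*} (s : Finset ι) (F : ι → (Fin n → ℝ) → ℂ)
    (hF : ∀ i ∈ s, DifferentiableAt ℝ (F i) x) :
    pd m (fun y => ∑ i ∈ s, F i y) x = ∑ i ∈ s, pd m (F i) x := by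
  simp [pd, fderiv_fun_sum hF]

lemma coord_eq (j : Fin n) :
    (fun y : Fin n → ℝ => ((y j : ℝ) : ℂ)) =
      ⇑(Complex.ofRealCLM.comp (ContinuousLinearMap.proj j) :
        (Fin n → ℝ) →L[ℝ] ℂ) := by
  funext y; simp

lemma coord_diff (j : Fin n) : DifferentiableAt ℝ (fun y : Fin n → ℝ => ((y j : ℝ) : ℂ)) x := by
  exact Complex.ofRealCLM.differentiableAt.comp x (differentiableAt_apply (𝕜 := ℝ) j x)

lemma pd_coord (j : Fin n) :
    pd m (fun y : Fin n → ℝ => ((y j : ℝ) : ℂ)) x = if j = m then 1 else 0 := by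
  rw [pd, coord_eq, ContinuousLinearMap.fderiv]
  simp [Pi.single_apply]
  split <;> simp

lemma pd_congr (h : f =ᶠ[nhds x] g) : pd m f x = pd m g x := by
  unfold pd; rw [h.fderiv_eq]

end helpers

/-- (Akhmetshin–Krichever–Volvovski, in flat coordinates.)  If smooth functions
`ξ_1^j`, `ξ_2^1`, `c_{kℓ}^m` on an open `Ω ⊆ ℝⁿ` satisfy
(i) `∂²ξ_1^j/∂x^k∂x^ℓ = c_{kℓ}^j` and
(ii) `ξ_1^m = -∂ξ_2^1/∂x^m + Σ_j x^j ∂ξ_1^j/∂x^m`, then the prepotential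
`F = -(1/2) ξ_2^1 + (1/2) Σ_j x^j ξ_1^j` satisfies `∂F/∂x^m = ξ_1^m` and
`∂³F/∂x^k∂x^ℓ∂x^m = c_{kℓ}^m`. -/
theorem prepotential_construction (n : ℕ) (Ω : Set (Fin n → ℝ)) (hΩ : IsOpen Ω)
    (ξ₁ : Fin n → (Fin n → ℝ) → ℂ) (ξ₂₁ : (Fin n → ℝ) → ℂ)
    (c : Fin n → Fin n → Fin n → (Fin n → ℝ) → ℂ)
    (hξ₁ : ∀ j, ContDiffOn ℝ (⊤ : ℕ∞) (ξ₁ j) Ω)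
    (hξ₂₁ : ContDiffOn ℝ (⊤ : ℕ∞) ξ₂₁ Ω)
    (hi : ∀ x ∈ Ω, ∀ j k ℓ : Fin n,
      pd k (fun y => pd ℓ (ξ₁ j) y) x = c k ℓ j x)
    (hii : ∀ x ∈ Ω, ∀ m : Fin n,
      ξ₁ m x = -pd m ξ₂₁ x + ∑ j, (x j : ℂ) * pd m (ξ₁ j) x) :
    (∀ x ∈ Ω, ∀ m : Fin n,
      pd m (fun y => -(1/2) * ξ₂₁ y + (1/2) * ∑ j, (y j : ℂ) * ξ₁ j y) x = ξ₁ m x) ∧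
    (∀ x ∈ Ω, ∀ k ℓ m : Fin n,
      pd k (fun y => pd ℓ (fun z =>
        pd m (fun w => -(1/2) * ξ₂₁ w + (1/2) * ∑ j, (w j : ℂ) * ξ₁ j w) z) y) x
        = c k ℓ m x) := by
  have hd1 : ∀ j, ∀ x ∈ Ω, DifferentiableAt ℝ (ξ₁ j) x := fun j x hx =>
    ((hξ₁ j).contDiffAt (hΩ.mem_nhds hx)).differentiableAt (by norm_num)
  have hd2 : ∀ x ∈ Ω, DifferentiableAt ℝ ξ₂₁ x := fun x hx =>
    (hξ₂₁.contDiffAt (hΩ.mem_nhds hx)).differentiableAt (by norm_num)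
  have part1 : ∀ x ∈ Ω, ∀ m : Fin n,
      pd m (fun y => -(1/2) * ξ₂₁ y + (1/2) * ∑ j, (y j : ℂ) * ξ₁ j y) x = ξ₁ m x := by
    intro x hx m
    have hdterm : ∀ j : Fin n, DifferentiableAt ℝ (fun y => ((y j : ℝ) : ℂ) * ξ₁ j y) x :=
      fun j => (coord_diff j).mul (hd1 j x hx)
    have hsumd : DifferentiableAt ℝ (fun y => ∑ j, ((y j : ℝ) : ℂ) * ξ₁ j y) x :=
      DifferentiableAt.fun_sum fun j _ => hdterm j
    rw [pd_add (((hd2 x hx).const_mul _)) (hsumd.const_mul _),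
      pd_const_mul _ (hd2 x hx), pd_const_mul _ hsumd,
      pd_sum _ _ (fun j _ => hdterm j)]
    have hterm : ∀ j : Fin n,
        pd m (fun y => ((y j : ℝ) : ℂ) * ξ₁ j y) x
          = (if j = m then 1 else 0) * ξ₁ j x + (x j : ℂ) * pd m (ξ₁ j) x := by
      intro j
      rw [pd_mul (coord_diff j) (hd1 j x hx), pd_coord]
    simp only [hterm]
    have hsplit : ∑ j : Fin n, ((if j = m then 1 else 0) * ξ₁ j x + (x j : ℂ) * pd m (ξ₁ j) x)
        = ξ₁ m x + ∑ j : Fin n, (x j : ℂ) * pd m (ξ₁ j) x := by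
      rw [Finset.sum_add_distrib]
      congr 1
      simp [Finset.sum_ite_eq']
    rw [hsplit]
    have h2 := hii x hx m
    linear_combination -h2 / 2
  refine ⟨part1, ?_⟩
  intro x hx k ℓ m
  have e1 : ∀ y ∈ Ω,
      pd ℓ (fun z => pd m (fun w => -(1/2) * ξ₂₁ w + (1/2) * ∑ j, (w j : ℂ) * ξ₁ j w) z) y
        = pd ℓ (ξ₁ m) y := by
    intro y hy
    have hev : (fun z => pd m (fun w => -(1/2) * ξ₂₁ w + (1/2) * ∑ j, (w j : ℂ) * ξ₁ j w) z)
        =ᶠ[nhds y] ξ₁ m := by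
      filter_upwards [hΩ.mem_nhds hy] with z hz using part1 z hz m
    exact pd_congr hev
  have hev2 : (fun y => pd ℓ (fun z =>
      pd m (fun w => -(1/2) * ξ₂₁ w + (1/2) * ∑ j, (w j : ℂ) * ξ₁ j w) z) y)
      =ᶠ[nhds x] (fun y => pd ℓ (ξ₁ m) y) := by
    filter_upwards [hΩ.mem_nhds hx] with y hy using e1 y hy
  rw [pd_congr hev2]
  exact hi x hx m k ℓ
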